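/- If the ordering graph restricted to edges of weight at least γ (for some γ > 1/2) is acyclic, then the Ranked Pairs output order contains every such edge: whenever at least γn voters rank τ before τ', the output ranks τ before τ'. -/

import Mathlib

/-- The fraction of the `n` voters (each voter `i` ranking transactions by the
injective rank function `rank i`) that rank `a` before `b`. -/
def voteWeight {V : Type*} (n : ℕ) (rank : Fin n → V → ℕ) (a b : V) : ℚ :=
  ((Finset.univ.filter (fun i : Fin n => rank i a < rank i b)).card : ℚ) / n

/-- A set `H` of directed edges has a directed cycle. -/
def hasCycle {V : Type*} (H : Set (V × V)) : Prop :=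
  ∃ v : V, Relation.TransGen (fun a b : V => (a, b) ∈ H) v v

/-- The greedy (Ranked Pairs) edge-selection process: iterate over the list of
edges, adding each edge to the accumulated set `H` unless doing so would create a
directed cycle in `H`. -/
noncomputable def greedy {V : Type*} : List (V × V) → Set (V × V) → Set (V × V)
  | [], H => H
  | e :: rest, H =>
      greedy rest
        (@ite _ (hasCycle (insert e H)) (Classical.propDecidable _) H (insert e H))

/-
When Ranked Pairs reaches an edge `(τ, τ')` of weight at least `γ`, every edge accepted so far
came earlier in the non-increasing order, so it also has weight at least `γ`. A cycle closed by
`(τ, τ')` would therefore be a cycle of the weight-`≥ γ` graph, which is acyclic; hence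
`(τ, τ')` is accepted, and accepted edges are never removed.
-/

theorem subset_greedy {V : Type*} : ∀ (L : List (V × V)) (H : Set (V × V)), H ⊆ greedy L H
  | [], _ => subset_rfl
  | e :: rest, H => by
    rw [greedy]
    split
    · exact subset_greedy rest H
    · exact (Set.subset_insert e H).trans (subset_greedy rest _)

theorem not_hasCycle_of_forall_mem {V : Type*} {r : V → V → Prop} {H : Set (V × V)}
    (hr : ¬ ∃ v, Relation.TransGen r v v) (hH : ∀ e ∈ H, r e.1 e.2) : ¬ hasCycle H :=
  fun ⟨v, hv⟩ => hr ⟨v, Relation.TransGen.mono (fun _ _ hab => hH _ hab) _ _ hv⟩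

theorem mem_greedy_of_le {V α : Type*} [Preorder α] {w : V → V → α} {γ : α}
    {L : List (V × V)} {H : Set (V × V)}
    (hacyc : ¬ ∃ v, Relation.TransGen (fun a b => γ ≤ w a b) v v)
    (hsort : L.Pairwise (fun e f => w f.1 f.2 ≤ w e.1 e.2))
    (hH : ∀ e ∈ H, γ ≤ w e.1 e.2) {e : V × V} (he : e ∈ L) (hγe : γ ≤ w e.1 e.2) :
    e ∈ greedy L H := by
  induction L generalizing H with
  | nil => cases he
  | cons f rest ih =>
    rw [greedy]
    obtain ⟨hf_heavier, hsort_rest⟩ := List.pairwise_cons.mp hsort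
    rcases List.mem_cons.mp he with rfl | he_rest
    · have hacc : ¬ hasCycle (insert e H) :=
        not_hasCycle_of_forall_mem hacyc (Set.forall_mem_insert.mpr ⟨hγe, hH⟩)
      rw [if_neg hacc]
      exact subset_greedy rest _ (Set.mem_insert _ _)
    · refine ih hsort_rest ?_ he_rest
      split
      · exact hH
      · exact Set.forall_mem_insert.mpr ⟨hγe.trans (hf_heavier e he_rest), hH⟩

theorem acyclic_gamma_edges_accepted_general {V : Type*} {n : ℕ}
    (rank : Fin n → V → ℕ)
    (γ : ℚ)
    (hacyc : ¬ ∃ v : V,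
      Relation.TransGen (fun a b : V => γ ≤ voteWeight n rank a b) v v)
    (L : List (V × V))
    (hmemL : ∀ a b : V, a ≠ b → (a, b) ∈ L)
    (hsort : L.Pairwise (fun e f => voteWeight n rank f.1 f.2 ≤ voteWeight n rank e.1 e.2))
    (τ τ' : V) (hne : τ ≠ τ')
    (hγw : γ ≤ voteWeight n rank τ τ') :
    (τ, τ') ∈ greedy L ∅ :=
  mem_greedy_of_le hacyc hsort (fun _ h => h.elim) (hmemL τ τ' hne) hγw

/-- If the ordering graph restricted to edges of weight at least `γ` (for some
`γ > 1/2`) is acyclic, then the Ranked Pairs output contains every such edge: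
whenever at least a `γ` fraction of voters rank `τ` before `τ'`, the output ranks
`τ` before `τ'`. -/
theorem acyclic_gamma_edges_accepted {V : Type*} [Fintype V] {n : ℕ} (hn : 0 < n)
    (rank : Fin n → V → ℕ) (hinj : ∀ i, Function.Injective (rank i))
    (γ : ℚ) (hγ : 1 / 2 < γ)
    (hacyc : ¬ ∃ v : V,
      Relation.TransGen (fun a b : V => γ ≤ voteWeight n rank a b) v v)
    (L : List (V × V))
    (hmemL : ∀ a b : V, a ≠ b → (a, b) ∈ L)
    (hnd : L.Nodup)
    (hirr : ∀ e ∈ L, e.1 ≠ e.2)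
    (hsort : L.Pairwise (fun e f => voteWeight n rank f.1 f.2 ≤ voteWeight n rank e.1 e.2))
    (τ τ' : V) (hne : τ ≠ τ')
    (hγw : γ ≤ voteWeight n rank τ τ') :
    (τ, τ') ∈ greedy L ∅ :=
  acyclic_gamma_edges_accepted_general rank γ hacyc L hmemL hsort τ τ' hne hγw
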